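/- Let u : ℝ² → ℝ⁴ be a C² immersion with unit normal field E ∈ C¹(ℝ², ℝ⁴) satisfying (∇u)ᵀE = 0 and |E| = 1. Set Tᵤ = (∇u)((∇u)ᵀ∇u)⁻¹. For a unit vector η ∈ ℝ², t = ⟨x,η⟩, Γ(t) = √2 sin t, Γ̄(t) = −(1/4) sin(2t), λ > 0, a ∈ C¹(ℝ²,ℝ), w ∈ C¹(ℝ²,ℝ²), define ũ = u + (Γ(λt)/λ) a E + Tᵤ((Γ̄(λt)/λ) a² η + w). Then (∇ũ)ᵀ∇ũ − (∇u)ᵀ∇u = a² η⊗η + (1/λ²)∇a⊗∇a + ((Γ(λt)²−1)/λ²) S₁ + (Γ(λt)Γ′(λt)/λ) S₂ + (Γ(λt)/λ) S₃ + (Γ̄(λt)/λ) S₄ + 2 sym∇w + R₁ + R₂, where S₁ = ∇a⊗∇a, S₂ = 2a sym(∇a⊗η), S₃ = 2a sym((∇u)ᵀ∇E), S₄ = 2 sym((∇u)ᵀ∇(a² Tᵤη)), and R₁, R₂ are explicit residual terms each of whose summands carries at least one factor of 1/λ or is quadratic in the perturbation. -/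

import Mathlib

/-- Partial derivative `∂ᵢ f` of a map `ℝ² → ℝ⁴`. -/
noncomputable def pd4 (f : (Fin 2 → ℝ) → (Fin 4 → ℝ)) (x : Fin 2 → ℝ) (i : Fin 2) :
    Fin 4 → ℝ :=
  fderiv ℝ f x (Pi.single i 1)

/-- Partial derivative `∂ᵢ a` of a scalar function on `ℝ²`. -/
noncomputable def pdS (a : (Fin 2 → ℝ) → ℝ) (x : Fin 2 → ℝ) (i : Fin 2) : ℝ :=
  fderiv ℝ a x (Pi.single i 1)

/-- The 2×2 matrix field `(∇f)ᵀ∇g` with entries `⟨∂ᵢf, ∂ⱼg⟩`. -/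
noncomputable def gramFG (f g : (Fin 2 → ℝ) → (Fin 4 → ℝ)) (x : Fin 2 → ℝ) :
    Fin 2 → Fin 2 → ℝ :=
  fun i j => ∑ k, pd4 f x i k * pd4 g x j k

/-- Symmetrization `sym M = (M + Mᵀ)/2`. -/
noncomputable def symM (M : Fin 2 → Fin 2 → ℝ) : Fin 2 → Fin 2 → ℝ :=
  fun i j => (M i j + M j i) / 2

/-- Outer product `v ⊗ w`. -/
noncomputable def outerM (v w : Fin 2 → ℝ) : Fin 2 → Fin 2 → ℝ :=
  fun i j => v i * w j

/-- Symmetric gradient `sym ∇w` of a vector field `w : ℝ² → ℝ²`. -/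
noncomputable def symGradV (w : (Fin 2 → ℝ) → (Fin 2 → ℝ)) (x : Fin 2 → ℝ) :
    Fin 2 → Fin 2 → ℝ :=
  fun i j => (pdS (fun y => w y j) x i + pdS (fun y => w y i) x j) / 2

/-- The Jacobian `∇u` as a 4×2 matrix. -/
noncomputable def Dmat (u : (Fin 2 → ℝ) → (Fin 4 → ℝ)) (x : Fin 2 → ℝ) :
    Matrix (Fin 4) (Fin 2) ℝ :=
  fun k i => pd4 u x i k

/-- The induced metric `(∇u)ᵀ∇u` as a `Matrix`. -/
noncomputable def gramMat (u : (Fin 2 → ℝ) → (Fin 4 → ℝ)) (x : Fin 2 → ℝ) :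
    Matrix (Fin 2) (Fin 2) ℝ :=
  fun i j => ∑ k, Dmat u x k i * Dmat u x k j

/-- The tangent frame `Tᵤ = (∇u)((∇u)ᵀ∇u)⁻¹`. -/
noncomputable def Tmat (u : (Fin 2 → ℝ) → (Fin 4 → ℝ)) (x : Fin 2 → ℝ) :
    Matrix (Fin 4) (Fin 2) ℝ :=
  Dmat u x * (gramMat u x)⁻¹

/-- The field `a² Tᵤ η : ℝ² → ℝ⁴`. -/
noncomputable def vfield (u : (Fin 2 → ℝ) → (Fin 4 → ℝ)) (a : (Fin 2 → ℝ) → ℝ)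
    (η : Fin 2 → ℝ) : (Fin 2 → ℝ) → (Fin 4 → ℝ) :=
  fun y k => (a y) ^ 2 * ∑ i, Tmat u y k i * η i

/-- The field `Tᵤ w : ℝ² → ℝ⁴`. -/
noncomputable def twfield (u : (Fin 2 → ℝ) → (Fin 4 → ℝ))
    (w : (Fin 2 → ℝ) → (Fin 2 → ℝ)) : (Fin 2 → ℝ) → (Fin 4 → ℝ) :=
  fun y k => ∑ i, Tmat u y k i * w y i

/-- The field `a E : ℝ² → ℝ⁴`. -/
noncomputable def aEfield (a : (Fin 2 → ℝ) → ℝ) (E : (Fin 2 → ℝ) → (Fin 4 → ℝ)) :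
    (Fin 2 → ℝ) → (Fin 4 → ℝ) :=
  fun y k => a y * E y k

/-- Kuiper's corrugation:
`ũ = u + (Γ(λt)/λ) a E + Tᵤ((Γ̄(λt)/λ) a² η + w)` with `Γ(t) = √2 sin t`,
`Γ̄(t) = −(1/4) sin 2t`, `t = ⟨x, η⟩`. -/
noncomputable def kuiper (u E : (Fin 2 → ℝ) → (Fin 4 → ℝ)) (a : (Fin 2 → ℝ) → ℝ)
    (η : Fin 2 → ℝ) (w : (Fin 2 → ℝ) → (Fin 2 → ℝ)) (l : ℝ) :
    (Fin 2 → ℝ) → (Fin 4 → ℝ) :=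
  fun x k => u x k +
    (Real.sqrt 2 * Real.sin (l * ∑ i, x i * η i)) / l * a x * E x k +
    (-(1 / 4) * Real.sin (2 * (l * ∑ i, x i * η i))) / l *
      ((a x) ^ 2 * ∑ i, Tmat u x k i * η i) +
    ∑ i, Tmat u x k i * w x i

/-!
Write `Γ₁ = √2 sin`, `Γ₂ = -¼ sin (2·)` and `v = a² Tᵤη`. By the chain rule
`∂ⱼũ = ∂ⱼu + Γ₁'(λt) ηⱼ a E + (Γ₁(λt)/λ) ∂ⱼ(aE) + Γ₂'(λt) ηⱼ v + (Γ₂(λt)/λ) ∂ⱼv + ∂ⱼ(Tᵤw)`.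
Expanding `⟨∂ᵢũ, ∂ⱼũ⟩`, the cross terms are evaluated with `(∇u)ᵀTᵤ = Id`, `(∇u)ᵀE = 0`,
`EᵀTᵤ = 0` and `|E| = 1` (hence `⟨E, ∂E⟩ = 0`). The two order-one contributions,
`Γ₁'² a² η⊗η` from `E·E` and `2Γ₂' a² η⊗η` from `∂u·v`, add up to `a² η⊗η` because
`Γ₁'² + 2Γ₂' = 2cos² − cos 2 = 1`; everything else is read off term by term.
-/

open Matrix

section MatrixCalculus

variable {F : Type*} [NormedAddCommGroup F] [NormedSpace ℝ F] {n : Type*} [Fintype n]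
  [DecidableEq n] {M : F → Matrix n n ℝ}

lemma differentiable_det (hM : ∀ i j, Differentiable ℝ fun y => M y i j) :
    Differentiable ℝ fun y => (M y).det := by
  simp only [det_apply]
  fun_prop

lemma differentiable_inv_apply (hM : ∀ i j, Differentiable ℝ fun y => M y i j)
    (hdet : ∀ y, (M y).det ≠ 0) (i j : n) : Differentiable ℝ fun y => (M y)⁻¹ i j := by
  simp only [inv_def, Ring.inverse_eq_inv', Matrix.smul_apply, adjugate_apply, smul_eq_mul]
  refine ((differentiable_det hM).inv hdet).mul (differentiable_det fun k l => ?_)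
  by_cases hk : k = j
  · simp [hk]
  · simpa [updateRow_ne hk] using hM k l

end MatrixCalculus

lemma add_dotProduct_add {n R : Type*} [Fintype n] [CommSemiring R] (a b c d : n → R) :
    (a + b) ⬝ᵥ (c + d) = a ⬝ᵥ c + (a ⬝ᵥ d + c ⬝ᵥ b) + b ⬝ᵥ d := by
  simp only [add_dotProduct, dotProduct_add, dotProduct_comm b c]
  abel

section PartialDerivatives

variable {f g : (Fin 2 → ℝ) → Fin 4 → ℝ} {c d : (Fin 2 → ℝ) → ℝ} {x : Fin 2 → ℝ} {i : Fin 2}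

lemma pdS_mul (hc : DifferentiableAt ℝ c x) (hd : DifferentiableAt ℝ d x) :
    pdS (fun y => c y * d y) x i = c x * pdS d x i + d x * pdS c x i := by
  simp [pdS, fderiv_fun_mul hc hd]

lemma pdS_sum {n : ℕ} {c : Fin n → (Fin 2 → ℝ) → ℝ} (hc : ∀ k, DifferentiableAt ℝ (c k) x) :
    pdS (fun y => ∑ k, c k y) x i = ∑ k, pdS (c k) x i := by
  simp [pdS, fderiv_fun_sum fun k _ => hc k]

lemma pd4_add (hf : DifferentiableAt ℝ f x) (hg : DifferentiableAt ℝ g x) :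
    pd4 (fun y => f y + g y) x i = pd4 f x i + pd4 g x i := by
  simp [pd4, fderiv_fun_add hf hg]

lemma pd4_smul (hc : DifferentiableAt ℝ c x) (hf : DifferentiableAt ℝ f x) :
    pd4 (fun y => c y • f y) x i = c x • pd4 f x i + pdS c x i • f x := by
  simp [pd4, pdS, fderiv_fun_smul hc hf]

lemma pd4_apply (hf : DifferentiableAt ℝ f x) (k : Fin 4) :
    pd4 f x i k = pdS (fun y => f y k) x i := by
  simp [pd4, pdS, fderiv_pi (differentiableAt_pi.mp hf)]

lemma dotProduct_pd4_self_eq_zero (hf : DifferentiableAt ℝ f x) (hunit : ∀ y, f y ⬝ᵥ f y = 1) :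
    f x ⬝ᵥ pd4 f x i = 0 := by
  have hk : ∀ k, DifferentiableAt ℝ (fun y => f y k) x := differentiableAt_pi.mp hf
  have hconst : pdS (fun y => f y ⬝ᵥ f y) x i = 0 := by simp [hunit, pdS]
  simp only [dotProduct] at hconst
  rw [pdS_sum fun k => (hk k).fun_mul (hk k)] at hconst
  simp only [pdS_mul (hk _) (hk _), ← pd4_apply hf, ← two_mul, ← Finset.mul_sum] at hconst
  exact (mul_eq_zero.mp hconst).resolve_left two_ne_zero

lemma differentiable_pd4_apply (hf : ContDiff ℝ 2 f) (i : Fin 2) (k : Fin 4) :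
    Differentiable ℝ fun y => pd4 f y i k := by
  have : Differentiable ℝ (fderiv ℝ f) :=
    (hf.fderiv_right (by norm_num)).differentiable one_ne_zero
  exact differentiable_pi.mp (this.clm_apply (differentiable_const _)) k

lemma pdS_comp_inner_div {Γ : ℝ → ℝ} {Γ' l : ℝ} {η : Fin 2 → ℝ}
    (hΓ : HasDerivAt Γ Γ' (l * ∑ i, x i * η i)) (hl : l ≠ 0) (j : Fin 2) :
    pdS (fun y => Γ (l * ∑ i, y i * η i) / l) x j = Γ' * η j := by
  have hinner : HasFDerivAt (fun y : Fin 2 → ℝ => l * ∑ i, y i * η i)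
      (l • ∑ i, η i • (ContinuousLinearMap.proj i : (Fin 2 → ℝ) →L[ℝ] ℝ)) x := by
    refine (HasFDerivAt.fun_sum fun i _ => ?_).const_mul l
    simpa [mul_comm] using (hasFDerivAt_apply i x).mul_const (η i)
  have hcomp : HasFDerivAt (fun y => Γ (l * ∑ i, y i * η i) / l)
      ((Γ' / l) • l • ∑ i, η i • (ContinuousLinearMap.proj i : (Fin 2 → ℝ) →L[ℝ] ℝ)) x :=
    (hΓ.div_const l).comp_hasFDerivAt (h₂ := fun s => Γ s / l) x hinner
  rw [pdS, hcomp.fderiv]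
  fin_cases j <;> simp [field]

end PartialDerivatives

section TangentFrame

variable {u : (Fin 2 → ℝ) → Fin 4 → ℝ} {x : Fin 2 → ℝ}

lemma gramMat_eq_transpose_mul : gramMat u x = (Dmat u x)ᵀ * Dmat u x := rfl

lemma transpose_Dmat_mul_Tmat (hdet : (gramMat u x).det ≠ 0) : (Dmat u x)ᵀ * Tmat u x = 1 := by
  rw [Tmat, ← Matrix.mul_assoc, ← gramMat_eq_transpose_mul]
  exact mul_nonsing_inv _ (isUnit_iff_ne_zero.mpr hdet)

lemma pd4_dotProduct_Tmat_mulVec (hdet : (gramMat u x).det ≠ 0) (i : Fin 2) (v : Fin 2 → ℝ) :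
    pd4 u x i ⬝ᵥ (Tmat u x *ᵥ v) = v i := by
  rw [dotProduct_mulVec]
  change (((Dmat u x)ᵀ * Tmat u x) *ᵥ v) i = v i
  rw [transpose_Dmat_mul_Tmat hdet, one_mulVec]

lemma dotProduct_Tmat_mulVec_eq_zero {e : Fin 4 → ℝ} (he : ∀ i, pd4 u x i ⬝ᵥ e = 0)
    (v : Fin 2 → ℝ) :
    e ⬝ᵥ (Tmat u x *ᵥ v) = 0 := by
  have : e ᵥ* Dmat u x = 0 := funext fun i => (dotProduct_comm _ _).trans (he i)
  rw [dotProduct_mulVec, Tmat, ← vecMul_vecMul, this, zero_vecMul, zero_dotProduct]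

lemma differentiable_Tmat_apply (hu : ContDiff ℝ 2 u) (hdet : ∀ x, (gramMat u x).det ≠ 0)
    (k : Fin 4) (i : Fin 2) : Differentiable ℝ fun y => Tmat u y k i := by
  have hD : ∀ k i, Differentiable ℝ fun y => Dmat u y k i :=
    fun k i => differentiable_pd4_apply hu i k
  have hG : ∀ i j, Differentiable ℝ fun y => gramMat u y i j := fun i j => by
    simp only [gramMat]; fun_prop
  simp only [Tmat, mul_apply]
  exact Differentiable.fun_sum fun j _ => (hD k j).mul (differentiable_inv_apply hG hdet j i)

lemma differentiable_Tmat_mulVec (hu : ContDiff ℝ 2 u) (hdet : ∀ x, (gramMat u x).det ≠ 0)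
    {v : (Fin 2 → ℝ) → Fin 2 → ℝ} (hv : Differentiable ℝ v) :
    Differentiable ℝ fun y => Tmat u y *ᵥ v y := by
  have hT := differentiable_Tmat_apply hu hdet
  have hv' := differentiable_pi.mp hv
  refine differentiable_pi.mpr fun k => ?_
  simp only [mulVec, dotProduct]
  fun_prop

end TangentFrame

section Corrugation

variable {u E : (Fin 2 → ℝ) → Fin 4 → ℝ} {a : (Fin 2 → ℝ) → ℝ} {η : Fin 2 → ℝ}
  {w : (Fin 2 → ℝ) → Fin 2 → ℝ} {l : ℝ} {x : Fin 2 → ℝ}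

lemma aEfield_eq : aEfield a E = fun y => a y • E y := rfl

lemma vfield_eq : vfield u a η = fun y => a y ^ 2 • (Tmat u y *ᵥ η) := rfl

lemma twfield_eq : twfield u w = fun y => Tmat u y *ᵥ w y := rfl

lemma kuiper_eq : kuiper u E a η w l = fun y =>
    u y + (Real.sqrt 2 * Real.sin (l * ∑ i, y i * η i) / l) • aEfield a E y
      + (-(1 / 4) * Real.sin (2 * (l * ∑ i, y i * η i)) / l) • vfield u a η y
      + twfield u w y := by
  funext y k
  simp only [kuiper, aEfield, vfield, twfield, Pi.add_apply, Pi.smul_apply, smul_eq_mul]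
  ring

lemma pd4_kuiper (hu : ContDiff ℝ 2 u) (hE : ContDiff ℝ 1 E) (ha : ContDiff ℝ 1 a)
    (hw : ContDiff ℝ 1 w) (hdet : ∀ x, (gramMat u x).det ≠ 0) (hl : l ≠ 0) (j : Fin 2) :
    pd4 (kuiper u E a η w l) x j =
      pd4 u x j
      + (Real.sqrt 2 * Real.cos (l * ∑ i, x i * η i) * η j) • (a x • E x)
      + (Real.sqrt 2 * Real.sin (l * ∑ i, x i * η i) / l) • pd4 (aEfield a E) x j
      + (-(1 / 2) * Real.cos (2 * (l * ∑ i, x i * η i)) * η j) • vfield u a η x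
      + (-(1 / 4) * Real.sin (2 * (l * ∑ i, x i * η i)) / l) • pd4 (vfield u a η) x j
      + pd4 (twfield u w) x j := by
  have du : Differentiable ℝ u := hu.differentiable (by norm_num)
  have dE : Differentiable ℝ E := hE.differentiable one_ne_zero
  have da : Differentiable ℝ a := ha.differentiable one_ne_zero
  have dw : Differentiable ℝ w := hw.differentiable one_ne_zero
  have daE : Differentiable ℝ (aEfield a E) := by rw [aEfield_eq]; fun_prop
  have dv : Differentiable ℝ (vfield u a η) := by
    have := differentiable_Tmat_mulVec hu hdet (differentiable_const η)
    rw [vfield_eq]; fun_prop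
  have dTw : Differentiable ℝ (twfield u w) := differentiable_Tmat_mulVec hu hdet dw
  have dΓ₁ : Differentiable ℝ fun y : Fin 2 → ℝ =>
      Real.sqrt 2 * Real.sin (l * ∑ i, y i * η i) / l := by fun_prop
  have dΓ₂ : Differentiable ℝ fun y : Fin 2 → ℝ =>
      -(1 / 4) * Real.sin (2 * (l * ∑ i, y i * η i)) / l := by fun_prop
  have hΓ₁ : pdS (fun y => Real.sqrt 2 * Real.sin (l * ∑ i, y i * η i) / l) x j
      = Real.sqrt 2 * Real.cos (l * ∑ i, x i * η i) * η j :=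
    pdS_comp_inner_div ((Real.hasDerivAt_sin _).const_mul _) hl j
  have hΓ₂ : pdS (fun y => -(1 / 4) * Real.sin (2 * (l * ∑ i, y i * η i)) / l) x j
      = -(1 / 2) * Real.cos (2 * (l * ∑ i, x i * η i)) * η j :=
    pdS_comp_inner_div ((((hasDerivAt_id' _).const_mul 2).sin.const_mul (-(1 / 4))).congr_deriv
      (by ring)) hl j
  rw [kuiper_eq, pd4_add (by fun_prop) (dTw x), pd4_add (by fun_prop) (by fun_prop),
    pd4_add (du x) (by fun_prop), pd4_smul (dΓ₁ x) (daE x), pd4_smul (dΓ₂ x) (dv x), hΓ₁, hΓ₂]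
  simp only [aEfield_eq]
  abel

end Corrugation

section DotProductTable

variable {u E : (Fin 2 → ℝ) → Fin 4 → ℝ} {a : (Fin 2 → ℝ) → ℝ} {η : Fin 2 → ℝ}
  {w : (Fin 2 → ℝ) → Fin 2 → ℝ} {x : Fin 2 → ℝ} {i j : Fin 2}

lemma pd4_aEfield (ha : DifferentiableAt ℝ a x) (hE : DifferentiableAt ℝ E x) :
    pd4 (aEfield a E) x i = a x • pd4 E x i + pdS a x i • E x :=
  pd4_smul ha hE

lemma pd4_dotProduct_pd4_aEfield (ha : DifferentiableAt ℝ a x) (hE : DifferentiableAt ℝ E x)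
    (hEn : ∀ i, pd4 u x i ⬝ᵥ E x = 0) :
    pd4 u x i ⬝ᵥ pd4 (aEfield a E) x j = a x * (pd4 u x i ⬝ᵥ pd4 E x j) := by
  simp [pd4_aEfield ha hE, hEn]

lemma dotProduct_pd4_aEfield (ha : DifferentiableAt ℝ a x) (hE : DifferentiableAt ℝ E x)
    (hunit : ∀ y, E y ⬝ᵥ E y = 1) :
    E x ⬝ᵥ pd4 (aEfield a E) x j = pdS a x j := by
  simp [pd4_aEfield ha hE, dotProduct_pd4_self_eq_zero hE hunit, hunit]

lemma pd4_aEfield_dotProduct_pd4_aEfield (ha : DifferentiableAt ℝ a x)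
    (hE : DifferentiableAt ℝ E x) (hunit : ∀ y, E y ⬝ᵥ E y = 1) :
    pd4 (aEfield a E) x i ⬝ᵥ pd4 (aEfield a E) x j
      = pdS a x i * pdS a x j + a x ^ 2 * (pd4 E x i ⬝ᵥ pd4 E x j) := by
  simp only [pd4_aEfield ha hE, add_dotProduct, dotProduct_add, smul_dotProduct,
    dotProduct_smul, smul_eq_mul, dotProduct_pd4_self_eq_zero hE hunit, hunit,
    dotProduct_comm (pd4 E x i) (E x)]
  ring

lemma vfield_dotProduct (v : Fin 4 → ℝ) :
    vfield u a η x ⬝ᵥ v = a x ^ 2 * ∑ i', η i' * ∑ k, Tmat u x k i' * v k := by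
  simp only [vfield, dotProduct, Finset.mul_sum, Finset.sum_mul]
  rw [Finset.sum_comm]
  exact Finset.sum_congr rfl fun _ _ => Finset.sum_congr rfl fun _ _ => by ring

lemma vfield_dotProduct_vfield :
    vfield u a η x ⬝ᵥ vfield u a η x = a x ^ 4 * ∑ k, (∑ i, Tmat u x k i * η i) ^ 2 := by
  simp only [dotProduct, Finset.mul_sum]
  exact Finset.sum_congr rfl fun _ _ => by simp only [vfield]; ring

lemma pd4_dotProduct_vfield (hdet : (gramMat u x).det ≠ 0) :
    pd4 u x i ⬝ᵥ vfield u a η x = a x ^ 2 * η i := by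
  rw [vfield_eq, dotProduct_smul, pd4_dotProduct_Tmat_mulVec hdet, smul_eq_mul]

lemma dotProduct_vfield (hEn : ∀ i, pd4 u x i ⬝ᵥ E x = 0) :
    E x ⬝ᵥ vfield u a η x = 0 := by
  rw [vfield_eq, dotProduct_smul, dotProduct_Tmat_mulVec_eq_zero hEn, smul_zero]

lemma pd4_aEfield_dotProduct_vfield (ha : DifferentiableAt ℝ a x) (hE : DifferentiableAt ℝ E x)
    (hEn : ∀ i, pd4 u x i ⬝ᵥ E x = 0) :
    pd4 (aEfield a E) x i ⬝ᵥ vfield u a η x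
      = a x ^ 3 * ∑ i', η i' * ∑ k, Tmat u x k i' * pd4 E x i k := by
  rw [pd4_aEfield ha hE, add_dotProduct, smul_dotProduct, smul_dotProduct, dotProduct_vfield hEn,
    dotProduct_comm, vfield_dotProduct]
  simp only [smul_eq_mul, mul_zero, add_zero]
  ring

lemma pd4_dotProduct_pd4_twfield (hu : ContDiff ℝ 2 u) (hdet : ∀ x, (gramMat u x).det ≠ 0)
    (hw : Differentiable ℝ w) :
    pd4 u x i ⬝ᵥ pd4 (twfield u w) x j
      = ∑ k, pd4 u x i k * ∑ i', pdS (fun y => Tmat u y k i') x j * w x i'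
        + pdS (fun y => w y i) x j := by
  have hT : ∀ k i', DifferentiableAt ℝ (fun y => Tmat u y k i') x :=
    fun k i' => differentiable_Tmat_apply hu hdet k i' x
  have hw' : ∀ i', DifferentiableAt ℝ (fun y => w y i') x := differentiableAt_pi.mp (hw x)
  have hTw : pd4 (twfield u w) x j = (fun k => ∑ i', pdS (fun y => Tmat u y k i') x j * w x i')
      + Tmat u x *ᵥ fun i' => pdS (fun y => w y i') x j := by
    ext k
    rw [pd4_apply (f := twfield u w) (differentiable_Tmat_mulVec hu hdet hw x)]
    simp only [twfield, Pi.add_apply, mulVec, dotProduct]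
    rw [pdS_sum fun i' => (hT k i').fun_mul (hw' i'), ← Finset.sum_add_distrib]
    exact Finset.sum_congr rfl fun i' _ => by rw [pdS_mul (hT k i') (hw' i')]; ring
  rw [hTw, dotProduct_add, pd4_dotProduct_Tmat_mulVec (hdet x)]
  rfl

end DotProductTable

theorem stmt6_general (u E : (Fin 2 → ℝ) → (Fin 4 → ℝ)) (a : (Fin 2 → ℝ) → ℝ)
    (η : Fin 2 → ℝ) (w : (Fin 2 → ℝ) → (Fin 2 → ℝ)) (l : ℝ)
    (hu : ContDiff ℝ 2 u) (hE : ContDiff ℝ 1 E) (ha : ContDiff ℝ 1 a)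
    (hw : ContDiff ℝ 1 w)
    (hdet : ∀ x, (gramMat u x).det ≠ 0)
    (hEn : ∀ x, ∀ i, ∑ k, pd4 u x i k * E x k = 0)
    (hEu : ∀ x, ∑ k, (E x k) ^ 2 = 1)
    (hl : 0 < l) :
    ∀ x : Fin 2 → ℝ,
      gramFG (kuiper u E a η w l) (kuiper u E a η w l) x - gramFG u u x
      = (a x) ^ 2 • outerM η η
        + (1 / l ^ 2) • outerM (pdS a x) (pdS a x)
        -- the four principal oscillatory error terms:
        + (((Real.sqrt 2 * Real.sin (l * ∑ i, x i * η i)) ^ 2 - 1) / l ^ 2) •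
            outerM (pdS a x) (pdS a x)
        + ((Real.sqrt 2 * Real.sin (l * ∑ i, x i * η i)) *
            (Real.sqrt 2 * Real.cos (l * ∑ i, x i * η i)) / l * (2 * a x)) •
            symM (outerM (pdS a x) η)
        + ((Real.sqrt 2 * Real.sin (l * ∑ i, x i * η i)) / l * (2 * a x)) •
            symM (gramFG u E x)
        + ((-(1 / 4) * Real.sin (2 * (l * ∑ i, x i * η i))) / l * 2) •
            symM (gramFG u (vfield u a η) x)
        -- the corrector term:
        + (2 : ℝ) • symGradV w x
        -- the residual error term R₁ (independent of w):
        + ((-(1 / 2) * Real.cos (2 * (l * ∑ i, x i * η i))) ^ 2 * (a x) ^ 4 *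
            (∑ k, (∑ i, Tmat u x k i * η i) ^ 2)) • outerM η η
        + (2 * (Real.sqrt 2 * Real.cos (l * ∑ i, x i * η i)) *
            (-(1 / 4) * Real.sin (2 * (l * ∑ i, x i * η i))) / l * a x) •
            symM (outerM η (fun j => ∑ k, E x k * pd4 (vfield u a η) x j k))
        + (2 * (Real.sqrt 2 * Real.sin (l * ∑ i, x i * η i)) *
            (-(1 / 2) * Real.cos (2 * (l * ∑ i, x i * η i))) / l * (a x) ^ 3) •
            symM (outerM η (fun j => ∑ i', η i' * ∑ k, Tmat u x k i' * pd4 E x j k))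
        + (2 * (-(1 / 4) * Real.sin (2 * (l * ∑ i, x i * η i))) *
            (-(1 / 2) * Real.cos (2 * (l * ∑ i, x i * η i))) / l * (a x) ^ 2) •
            symM (outerM η
              (fun j => ∑ i', η i' * ∑ k, Tmat u x k i' * pd4 (vfield u a η) x j k))
        + ((Real.sqrt 2 * Real.sin (l * ∑ i, x i * η i)) ^ 2 / l ^ 2 * (a x) ^ 2) •
            gramFG E E x
        + (2 * (Real.sqrt 2 * Real.sin (l * ∑ i, x i * η i)) *
            (-(1 / 4) * Real.sin (2 * (l * ∑ i, x i * η i))) / l ^ 2) •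
            symM (gramFG (aEfield a E) (vfield u a η) x)
        + ((-(1 / 4) * Real.sin (2 * (l * ∑ i, x i * η i))) ^ 2 / l ^ 2) •
            gramFG (vfield u a η) (vfield u a η) x
        -- the residual error term R₂ (involving w):
        + (2 : ℝ) • symM (fun i j =>
            ∑ k, pd4 u x i k * ∑ i', pdS (fun y => Tmat u y k i') x j * w x i')
        + (2 * (Real.sqrt 2 * Real.cos (l * ∑ i, x i * η i)) * a x) •
            symM (outerM η (fun j => ∑ k, E x k * pd4 (twfield u w) x j k))
        + (2 * (-(1 / 2) * Real.cos (2 * (l * ∑ i, x i * η i))) * (a x) ^ 2) •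
            symM (outerM η
              (fun j => ∑ i', η i' * ∑ k, Tmat u x k i' * pd4 (twfield u w) x j k))
        + gramFG (twfield u w) (twfield u w) x
        + (2 * (Real.sqrt 2 * Real.sin (l * ∑ i, x i * η i)) / l) •
            symM (gramFG (aEfield a E) (twfield u w) x)
        + (2 * (-(1 / 4) * Real.sin (2 * (l * ∑ i, x i * η i))) / l) •
            symM (gramFG (vfield u a η) (twfield u w) x) := by
  intro x
  have da : DifferentiableAt ℝ a x := ha.differentiable one_ne_zero x
  have dE : DifferentiableAt ℝ E x := hE.differentiable one_ne_zero x
  have hunit : ∀ y, E y ⬝ᵥ E y = 1 := fun y => by simpa [dotProduct, sq] using hEu y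
  have hDE : ∀ i, pd4 u x i ⬝ᵥ E x = 0 := hEn x
  ext i j
  simp only [Pi.add_apply, Pi.sub_apply, Pi.smul_apply, smul_eq_mul]
  rw [show gramFG (kuiper u E a η w l) (kuiper u E a η w l) x i j
      = pd4 (kuiper u E a η w l) x i ⬝ᵥ pd4 (kuiper u E a η w l) x j from rfl,
    pd4_kuiper hu hE ha hw hdet hl.ne' i, pd4_kuiper hu hE ha hw hdet hl.ne' j]
  -- each cross term comes out as (earlier summand of `pd4_kuiper`) ⬝ᵥ (later one), the
  -- orientation in which the dot-product table is stated
  simp only [add_dotProduct_add]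
  simp only [add_dotProduct, smul_dotProduct, dotProduct_smul, smul_eq_mul]
  -- before `vfield_dotProduct`, which would also match `v ⬝ᵥ v`
  rw [vfield_dotProduct_vfield]
  simp only [hDE, hunit, pd4_dotProduct_pd4_aEfield da dE hDE,
    dotProduct_pd4_aEfield da dE hunit, pd4_aEfield_dotProduct_pd4_aEfield da dE hunit,
    pd4_dotProduct_vfield (hdet x), dotProduct_vfield hDE,
    pd4_aEfield_dotProduct_vfield da dE hDE, vfield_dotProduct,
    pd4_dotProduct_pd4_twfield hu hdet (hw.differentiable one_ne_zero)]
  simp only [gramFG, symM, outerM, symGradV, dotProduct]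
  -- `(√2 cos θ)² - cos 2θ = 1` collapses the order-one terms to `a² η⊗η`
  have h2 : Real.sqrt 2 * Real.sqrt 2 = 2 := Real.mul_self_sqrt zero_le_two
  linear_combination (a x ^ 2 * η i * η j * Real.cos (l * ∑ i, x i * η i) ^ 2) * h2
    - (a x ^ 2 * η i * η j) * Real.cos_two_mul (l * ∑ i, x i * η i)

theorem stmt6 (u E : (Fin 2 → ℝ) → (Fin 4 → ℝ)) (a : (Fin 2 → ℝ) → ℝ)
    (η : Fin 2 → ℝ) (w : (Fin 2 → ℝ) → (Fin 2 → ℝ)) (l : ℝ)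
    (hu : ContDiff ℝ 2 u) (hE : ContDiff ℝ 1 E) (ha : ContDiff ℝ 1 a)
    (hw : ContDiff ℝ 1 w)
    (himm : ∀ x, Function.Injective (fderiv ℝ u x))
    (hdet : ∀ x, (gramMat u x).det ≠ 0)
    (hEn : ∀ x, ∀ i, ∑ k, pd4 u x i k * E x k = 0)
    (hEu : ∀ x, ∑ k, (E x k) ^ 2 = 1)
    (hη : ∑ i, (η i) ^ 2 = 1) (hl : 0 < l) :
    ∀ x : Fin 2 → ℝ,
      gramFG (kuiper u E a η w l) (kuiper u E a η w l) x - gramFG u u x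
      = (a x) ^ 2 • outerM η η
        + (1 / l ^ 2) • outerM (pdS a x) (pdS a x)
        -- the four principal oscillatory error terms:
        + (((Real.sqrt 2 * Real.sin (l * ∑ i, x i * η i)) ^ 2 - 1) / l ^ 2) •
            outerM (pdS a x) (pdS a x)
        + ((Real.sqrt 2 * Real.sin (l * ∑ i, x i * η i)) *
            (Real.sqrt 2 * Real.cos (l * ∑ i, x i * η i)) / l * (2 * a x)) •
            symM (outerM (pdS a x) η)
        + ((Real.sqrt 2 * Real.sin (l * ∑ i, x i * η i)) / l * (2 * a x)) •
            symM (gramFG u E x)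
        + ((-(1 / 4) * Real.sin (2 * (l * ∑ i, x i * η i))) / l * 2) •
            symM (gramFG u (vfield u a η) x)
        -- the corrector term:
        + (2 : ℝ) • symGradV w x
        -- the residual error term R₁ (independent of w):
        + ((-(1 / 2) * Real.cos (2 * (l * ∑ i, x i * η i))) ^ 2 * (a x) ^ 4 *
            (∑ k, (∑ i, Tmat u x k i * η i) ^ 2)) • outerM η η
        + (2 * (Real.sqrt 2 * Real.cos (l * ∑ i, x i * η i)) *
            (-(1 / 4) * Real.sin (2 * (l * ∑ i, x i * η i))) / l * a x) •
            symM (outerM η (fun j => ∑ k, E x k * pd4 (vfield u a η) x j k))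
        + (2 * (Real.sqrt 2 * Real.sin (l * ∑ i, x i * η i)) *
            (-(1 / 2) * Real.cos (2 * (l * ∑ i, x i * η i))) / l * (a x) ^ 3) •
            symM (outerM η (fun j => ∑ i', η i' * ∑ k, Tmat u x k i' * pd4 E x j k))
        + (2 * (-(1 / 4) * Real.sin (2 * (l * ∑ i, x i * η i))) *
            (-(1 / 2) * Real.cos (2 * (l * ∑ i, x i * η i))) / l * (a x) ^ 2) •
            symM (outerM η
              (fun j => ∑ i', η i' * ∑ k, Tmat u x k i' * pd4 (vfield u a η) x j k))
        + ((Real.sqrt 2 * Real.sin (l * ∑ i, x i * η i)) ^ 2 / l ^ 2 * (a x) ^ 2) •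
            gramFG E E x
        + (2 * (Real.sqrt 2 * Real.sin (l * ∑ i, x i * η i)) *
            (-(1 / 4) * Real.sin (2 * (l * ∑ i, x i * η i))) / l ^ 2) •
            symM (gramFG (aEfield a E) (vfield u a η) x)
        + ((-(1 / 4) * Real.sin (2 * (l * ∑ i, x i * η i))) ^ 2 / l ^ 2) •
            gramFG (vfield u a η) (vfield u a η) x
        -- the residual error term R₂ (involving w):
        + (2 : ℝ) • symM (fun i j =>
            ∑ k, pd4 u x i k * ∑ i', pdS (fun y => Tmat u y k i') x j * w x i')
        + (2 * (Real.sqrt 2 * Real.cos (l * ∑ i, x i * η i)) * a x) •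
            symM (outerM η (fun j => ∑ k, E x k * pd4 (twfield u w) x j k))
        + (2 * (-(1 / 2) * Real.cos (2 * (l * ∑ i, x i * η i))) * (a x) ^ 2) •
            symM (outerM η
              (fun j => ∑ i', η i' * ∑ k, Tmat u x k i' * pd4 (twfield u w) x j k))
        + gramFG (twfield u w) (twfield u w) x
        + (2 * (Real.sqrt 2 * Real.sin (l * ∑ i, x i * η i)) / l) •
            symM (gramFG (aEfield a E) (twfield u w) x)
        + (2 * (-(1 / 4) * Real.sin (2 * (l * ∑ i, x i * η i))) / l) •
            symM (gramFG (vfield u a η) (twfield u w) x) :=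
  stmt6_general u E a η w l hu hE ha hw hdet hEn hEu hl
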